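/- arXiv:1702.02177 — 3 statements merged into one kernel-verified Lean document; each statement's English description precedes it below -/
import Mathlib

section
/- Let φ : ℂ → ℝ be harmonic with φ(0) = 0, and suppose φ(z) ≥ −C|z| for all z ∈ ℂ for some constant C > 0. Then |φ(z)| ≤ 6C|z| for all z ∈ ℂ. -/
/-!
A harmonic function on the plane is the real part of an entire function `F`, which we normalise
by `F 0 = 0`. The lower bound `φ ≥ -C‖z‖` says that `Re (-F) ≤ C R` on the disc of radius `R`,
so the Borel–Carathéodory inequality on the disc of radius `2‖z‖` gives `‖F z‖ ≤ 4 C ‖z‖`,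
and `|φ z| = |Re F z| ≤ ‖F z‖`.
-/

open Complex Metric InnerProductSpace Laplacian

theorem fderiv_fderiv_apply {𝕜 E F : Type*} [NontriviallyNormedField 𝕜]
    [NormedAddCommGroup E] [NormedSpace 𝕜 E] [NormedAddCommGroup F] [NormedSpace 𝕜 F]
    {f : E → F} {z : E} (hf : DifferentiableAt 𝕜 (fderiv 𝕜 f) z) (u v : E) :
    fderiv 𝕜 (fun w => fderiv 𝕜 f w v) z u = fderiv 𝕜 (fderiv 𝕜 f) z u v := by
  rw [fderiv_clm_apply hf (differentiableAt_const v)]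
  simp

theorem laplacian_complexPlane_eq_fderiv_fderiv {F : Type*} [NormedAddCommGroup F]
    [NormedSpace ℝ F] {f : ℂ → F} (hf : ContDiff ℝ 2 f) (z : ℂ) :
    Δ f z = fderiv ℝ (fun w => fderiv ℝ f w 1) z 1 + fderiv ℝ (fun w => fderiv ℝ f w I) z I := by
  have hd : Differentiable ℝ (fderiv ℝ f) :=
    (hf.fderiv_right (m := 1) le_rfl).differentiable one_ne_zero
  simp [laplacian_eq_iteratedFDeriv_complexPlane, iteratedFDeriv_two_apply,
    fderiv_fderiv_apply (hd z)]

theorem Complex.norm_le_of_re_le_mul_norm {f : ℂ → ℂ} (hf : Differentiable ℂ f) (hf₀ : f 0 = 0)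
    {C : ℝ} (hC : 0 < C) (hre : ∀ w, (f w).re ≤ C * ‖w‖) (z : ℂ) :
    ‖f z‖ ≤ 4 * C * ‖z‖ := by
  rcases eq_or_ne z 0 with rfl | hz
  · simp [hf₀]
  have hz_pos : 0 < ‖z‖ := norm_pos_iff.2 hz
  have hzR : z ∈ ball 0 (2 * ‖z‖) := by rw [mem_ball_zero_iff]; linarith
  have hre_ball : Set.MapsTo f (ball 0 (2 * ‖z‖)) {w | w.re ≤ C * (2 * ‖z‖)} := fun w hw =>
    (hre w).trans (by gcongr; exact (mem_ball_zero_iff.1 hw).le)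
  calc ‖f z‖ ≤ 2 * (C * (2 * ‖z‖)) * ‖z‖ / (2 * ‖z‖ - ‖z‖) :=
        borelCaratheodory_zero (by positivity) hf.differentiableOn hre_ball (by positivity) hzR hf₀
    _ = 4 * C * ‖z‖ := by field_simp; ring

/-- Let `φ : ℂ → ℝ` be harmonic with `φ(0) = 0` and `φ(z) ≥ -C|z|` for all
`z ∈ ℂ`, for some `C > 0`. Then `|φ(z)| ≤ 6C|z|` for all `z`. -/
theorem harmonic_sublinear_growth (φ : ℂ → ℝ)
    (hsmooth : ContDiff ℝ 2 φ)
    (hharm : ∀ z : ℂ,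
      fderiv ℝ (fun w => fderiv ℝ φ w 1) z 1
        + fderiv ℝ (fun w => fderiv ℝ φ w Complex.I) z Complex.I = 0)
    (h0 : φ 0 = 0)
    (C : ℝ) (hC : 0 < C)
    (hbound : ∀ z : ℂ, φ z ≥ -C * ‖z‖) :
    ∀ z : ℂ, |φ z| ≤ 6 * C * ‖z‖ := by
  intro z
  have hφ : HarmonicOnNhd φ Set.univ := fun w _ => ⟨hsmooth.contDiffAt,
    .of_forall fun w => (laplacian_complexPlane_eq_fderiv_fderiv hsmooth w).trans (hharm w)⟩
  obtain ⟨F, hF, hFre⟩ := hφ.exists_analyticOnNhd_univ_re_eq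
  have hF0 : (F 0).re = 0 := congrFun hFre 0 ▸ h0
  have hre : ∀ w, (F 0 - F w).re = -φ w := fun w => by simp [← hFre, hF0]
  have hnorm := Complex.norm_le_of_re_le_mul_norm (f := fun w => F 0 - F w)
    (fun w => (hF w trivial).differentiableAt.const_sub _) (sub_self _) hC
    (fun w => by linarith [hre w, hbound w]) z
  calc |φ z| = |(F 0 - F z).re| := by rw [hre, abs_neg]
    _ ≤ ‖F 0 - F z‖ := abs_re_le_norm _
    _ ≤ 6 * C * ‖z‖ := hnorm.trans (by gcongr; norm_num)
end

section
/- Let g : ℍⁿ → ℍ be holomorphic with f(λ,…,λ)=λ, ∂g/∂z_j(λ,…,λ) = 1/n for all λ and j, and suppose g is everywhere extremal, i.e. ∑_j Im(z_j)|∂g/∂z_j(z)| = Im g(z) for all z ∈ ℍⁿ. If g = t·f₁ + (1−t)·f₂ with t ∈ (0,1) and f₁, f₂ : ℍⁿ → ℍ holomorphic satisfying the same normalization conditions (identity on the diagonal, all diagonal partials equal 1/n), then f₁ = f₂ = g. -/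
/-!
The generalized Schwarz lemma `∑ⱼ Im zⱼ |∂ⱼ f(z)| ≤ Im f(z)` holds for `f₁` and `f₂`; it is
obtained from the one-variable Schwarz lemma along a holomorphic disc through `z` built from
rotated Cayley transforms. Since `g = t f₁ + (1 - t) f₂` attains equality, every triangle
inequality `|t a + (1 - t) b| ≤ t |a| + (1 - t) |b|` with `a = ∂ⱼ f₁(z)`, `b = ∂ⱼ f₂(z)` is an
equality, so `a` and `b` lie on a common ray and `(∂ⱼ f₁ - ∂ⱼ f₂) / ∂ⱼ g` is real-valued.

Partial derivatives of a holomorphic map are locally uniform limits of difference quotients, hence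
continuous and holomorphic along complex lines. So near `(i, …, i)`, where `∂ⱼ g = 1/n ≠ 0`, the
real quotient is holomorphic in each variable separately, hence constant, hence `0` because the
partials of `f₁` and `f₂` agree on the diagonal. Thus `f₁ - f₂` vanishes near `(i, …, i)`, and the
identity theorem on the convex domain `ℍⁿ` gives `f₁ = f₂ = g`.
-/

open Complex Set Metric Function Filter
open scoped ComplexConjugate Topology

noncomputable def cayley (c ω : ℂ) : ℂ := (ω - c) / (ω - conj c)

noncomputable def cayleyInv (c w : ℂ) : ℂ := (c - conj c * w) / (1 - w)

section Cayley

variable {c ω w : ℂ}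

lemma sub_conj_ne_zero (hc : 0 < c.im) (hω : 0 < ω.im) : ω - conj c ≠ 0 := by
  intro h
  have := congrArg im h
  simp at this
  linarith

lemma one_sub_ne_zero_of_mem_ball (hw : w ∈ ball (0 : ℂ) 1) : 1 - w ≠ 0 := by
  rintro h
  rw [← sub_eq_zero.1 h] at hw
  simp at hw

lemma cayley_self : cayley c c = 0 := by simp [cayley]

lemma cayleyInv_zero : cayleyInv c 0 = c := by simp [cayleyInv]

lemma cayley_mem_ball (hc : 0 < c.im) (hω : 0 < ω.im) : cayley c ω ∈ ball (0 : ℂ) 1 := by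
  have hne := sub_conj_ne_zero hc hω
  rw [mem_ball_zero_iff, cayley, norm_div, div_lt_one (norm_pos_iff.2 hne), ← sq_lt_sq₀
    (norm_nonneg _) (norm_nonneg _), Complex.sq_norm, Complex.sq_norm]
  simp [normSq_apply]
  nlinarith [mul_pos hc hω]

lemma im_cayleyInv_pos (hc : 0 < c.im) (hw : w ∈ ball (0 : ℂ) 1) : 0 < (cayleyInv c w).im := by
  have hne := one_sub_ne_zero_of_mem_ball hw
  have hw' : normSq w < 1 := by
    rw [mem_ball_zero_iff] at hw
    rw [← Complex.sq_norm]; nlinarith [norm_nonneg w]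
  have : (cayleyInv c w).im = c.im * (1 - normSq w) / normSq (1 - w) := by
    rw [cayleyInv, div_im, div_sub_div_same]
    congr 1
    simp [normSq_apply]
    ring
  rw [this]
  exact div_pos (mul_pos hc (by linarith)) (normSq_pos.2 hne)

lemma hasDerivAt_cayley (hc : 0 < c.im) : HasDerivAt (cayley c) (c - conj c)⁻¹ c := by
  have hne := sub_conj_ne_zero hc hc
  exact (((hasDerivAt_id' c).sub_const c).div ((hasDerivAt_id' c).sub_const (conj c))
    hne).congr_deriv (by simp; field_simp)

lemma hasDerivAt_cayleyInv : HasDerivAt (cayleyInv c) (c - conj c) 0 :=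
  ((((hasDerivAt_id' (0 : ℂ)).const_mul (conj c)).const_sub c).div
    ((hasDerivAt_id' (0 : ℂ)).const_sub 1) (by simp)).congr_deriv (by simp; ring)

lemma differentiableAt_cayley (hc : 0 < c.im) (hω : 0 < ω.im) :
    DifferentiableAt ℂ (cayley c) ω :=
  ((differentiableAt_id.sub_const c).div (differentiableAt_id.sub_const _)
    (sub_conj_ne_zero hc hω))

lemma differentiableAt_cayleyInv (hw : w ∈ ball (0 : ℂ) 1) :
    DifferentiableAt ℂ (cayleyInv c) w :=
  ((differentiableAt_id.const_mul _).const_sub c).div (differentiableAt_id.const_sub 1)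
    (one_sub_ne_zero_of_mem_ball hw)

end Cayley

def upperHalfSpace (ι : Type*) : Set (ι → ℂ) := {z | ∀ j, 0 < (z j).im}

lemma upperHalfSpace_eq_pi (ι : Type*) :
    upperHalfSpace ι = univ.pi fun _ => {w : ℂ | 0 < w.im} := by
  ext z; simp [upperHalfSpace]

lemma isOpen_upperHalfSpace (ι : Type*) [Finite ι] : IsOpen (upperHalfSpace ι) := by
  rw [upperHalfSpace_eq_pi]
  exact isOpen_set_pi finite_univ fun _ _ => isOpen_lt continuous_const continuous_im

lemma convex_upperHalfSpace (ι : Type*) : Convex ℝ (upperHalfSpace ι) := by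
  rw [upperHalfSpace_eq_pi]
  exact convex_pi fun _ _ => convex_halfSpace_im_gt 0

lemma ContinuousLinearMap.apply_eq_sum_mul_apply_single {ι : Type*} [Fintype ι] [DecidableEq ι]
    (L : (ι → ℂ) →L[ℂ] ℂ) (v : ι → ℂ) : L v = ∑ j, v j * L (Pi.single j 1) := by
  conv_lhs => rw [← Finset.univ_sum_single v]
  rw [map_sum]
  refine Finset.sum_congr rfl fun j _ => ?_
  rw [← smul_eq_mul, ← map_smul, ← Pi.single_smul, smul_eq_mul, mul_one]

theorem sum_im_mul_norm_fderiv_single_le_im {ι : Type*} [Fintype ι] [DecidableEq ι]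
    {f : (ι → ℂ) → ℂ} (hf : DifferentiableOn ℂ f (upperHalfSpace ι))
    (hmaps : ∀ z ∈ upperHalfSpace ι, 0 < (f z).im) {z : ι → ℂ} (hz : z ∈ upperHalfSpace ι) :
    ∑ j, (z j).im * ‖fderiv ℂ f z (Pi.single j 1)‖ ≤ (f z).im := by
  choose ε hε_norm hε_mul using fun j => exists_norm_eq_mul_self (fderiv ℂ f z (Pi.single j 1))
  -- The phases `ε j` turn every term `∂ⱼ f(z) δⱼ'(0) = 2 i Im zⱼ ε j ∂ⱼ f(z)` of `(f ∘ δ)'(0)`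
  -- into a positive multiple of `i`.
  set δ : ℂ → ι → ℂ := fun w j => cayleyInv (z j) (ε j * w)
  have hεw : ∀ j, ∀ w ∈ ball (0 : ℂ) 1, ε j * w ∈ ball (0 : ℂ) 1 := fun j w hw => by
    simpa [norm_mul, hε_norm] using hw
  have hδ_mem : ∀ w ∈ ball (0 : ℂ) 1, δ w ∈ upperHalfSpace ι :=
    fun w hw j => im_cayleyInv_pos (hz j) (hεw j w hw)
  have hδ_diff : ∀ w ∈ ball (0 : ℂ) 1, DifferentiableAt ℂ δ w := fun w hw =>
    differentiableAt_pi.2 fun j =>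
      (differentiableAt_cayleyInv (hεw j w hw)).comp w (differentiableAt_id.const_mul _)
  have hδ_zero : δ 0 = z := by ext j; simp [δ, cayleyInv_zero]
  have hδ_deriv : HasDerivAt δ (fun j => (z j - conj (z j)) * ε j) 0 := by
    refine hasDerivAt_pi.2 fun j => ?_
    have hc : HasDerivAt (cayleyInv (z j)) (z j - conj (z j)) (ε j * 0) := by
      rw [mul_zero]; exact hasDerivAt_cayleyInv
    have h := hc.comp (0 : ℂ) ((hasDerivAt_id' (0 : ℂ)).const_mul (ε j))
    rw [mul_one] at h
    exact h
  set ψ : ℂ → ℂ := cayley (f z) ∘ f ∘ δ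
  have hψ_diff : DifferentiableOn ℂ ψ (ball 0 1) := fun w hw =>
    ((differentiableAt_cayley (hmaps z hz) (hmaps _ (hδ_mem w hw))).comp w
      ((hf.differentiableAt ((isOpen_upperHalfSpace ι).mem_nhds (hδ_mem w hw))).comp w
        (hδ_diff w hw))).differentiableWithinAt
  have hψ_maps : MapsTo ψ (ball 0 1) (closedBall (ψ 0) 1) := by
    intro w hw
    rw [show ψ 0 = 0 by simp [ψ, hδ_zero, cayley_self]]
    exact ball_subset_closedBall (cayley_mem_ball (hmaps z hz) (hmaps _ (hδ_mem w hw)))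
  have hψ_deriv : HasDerivAt ψ
      ((f z - conj (f z))⁻¹ * fderiv ℂ f z (fun j => (z j - conj (z j)) * ε j)) 0 := by
    have hf' : HasFDerivAt f (fderiv ℂ f z) (δ 0) := by
      rw [hδ_zero]
      exact (hf.differentiableAt ((isOpen_upperHalfSpace ι).mem_nhds hz)).hasFDerivAt
    have hc : HasDerivAt (cayley (f z)) (f z - conj (f z))⁻¹ (f (δ 0)) := by
      rw [hδ_zero]; exact hasDerivAt_cayley (hmaps z hz)
    exact hc.comp 0 (hf'.comp_hasDerivAt 0 hδ_deriv)
  have hderiv_eq : (f z - conj (f z))⁻¹ * fderiv ℂ f z (fun j => (z j - conj (z j)) * ε j)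
      = ((∑ j, (z j).im * ‖fderiv ℂ f z (Pi.single j 1)‖) / (f z).im : ℝ) := by
    have him : (f z).im ≠ 0 := (hmaps z hz).ne'
    rw [ContinuousLinearMap.apply_eq_sum_mul_apply_single]
    simp only [mul_assoc, ← hε_mul, sub_conj]
    have hsum : ∑ j, ((2 * (z j).im : ℝ) : ℂ) * (I * ‖fderiv ℂ f z (Pi.single j 1)‖)
        = 2 * I * ((∑ j, (z j).im * ‖fderiv ℂ f z (Pi.single j 1)‖ : ℝ) : ℂ) := by
      push_cast
      rw [Finset.mul_sum]
      exact Finset.sum_congr rfl fun j _ => by ring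
    rw [hsum]
    push_cast
    field_simp
  have hS : 0 ≤ ∑ j, (z j).im * ‖fderiv ℂ f z (Pi.single j 1)‖ :=
    Finset.sum_nonneg fun j _ => mul_nonneg (hz j).le (norm_nonneg _)
  have h := norm_deriv_le_div_of_mapsTo_ball hψ_diff hψ_maps one_pos
  rwa [hψ_deriv.deriv, hderiv_eq, norm_real, Real.norm_of_nonneg (div_nonneg hS (hmaps z hz).le),
    div_one, div_le_one (hmaps z hz)] at h

section Regularity

variable {E F : Type*} [NormedAddCommGroup E] [NormedSpace ℂ E] [NormedAddCommGroup F]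
  [NormedSpace ℂ F]

lemma dist_dslope_deriv_le_of_mapsTo_ball [CompleteSpace F] {φ : ℂ → F} {c z : ℂ} {R M : ℝ}
    (hd : DifferentiableOn ℂ φ (ball c R)) (hmaps : MapsTo φ (ball c R) (closedBall (φ c) M))
    (hz : z ∈ ball c R) : dist (dslope φ c z) (deriv φ c) ≤ 2 * M / R ^ 2 * dist z c := by
  have hR : 0 < R := nonempty_ball.1 ⟨z, hz⟩
  have hbound : ∀ ζ ∈ ball c R, ‖dslope φ c ζ‖ ≤ M / R := fun ζ hζ =>
    norm_dslope_le_div_of_mapsTo_ball hd hmaps hζ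
  have hd' : DifferentiableOn ℂ (dslope φ c) (ball c R) :=
    (differentiableOn_dslope (ball_mem_nhds c hR)).2 hd
  have hmaps' : MapsTo (dslope φ c) (ball c R) (closedBall (dslope φ c c) (2 * M / R)) := by
    intro ζ hζ
    rw [mem_closedBall, dist_eq_norm]
    calc ‖dslope φ c ζ - dslope φ c c‖ ≤ ‖dslope φ c ζ‖ + ‖dslope φ c c‖ := norm_sub_le _ _
      _ ≤ M / R + M / R := add_le_add (hbound ζ hζ) (hbound c (mem_ball_self hR))
      _ = 2 * M / R := by ring
  have h := dist_le_div_mul_dist_of_mapsTo_ball hd' hmaps' hz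
  rw [dslope_same] at h
  exact h.trans_eq (by field_simp)

lemma tendstoUniformlyOn_nhds_zero_of_dist_le {X Y G : Type*} [PseudoMetricSpace Y]
    [SeminormedAddCommGroup G] {F : G → X → Y} {g : X → Y} {s : Set X} {l : Filter G}
    (hl : l ≤ 𝓝 0) {ρ C : ℝ} (hρ : 0 < ρ)
    (h : ∀ ε : G, ‖ε‖ < ρ → ∀ x ∈ s, dist (F ε x) (g x) ≤ C * ‖ε‖) :
    TendstoUniformlyOn F g l s := by
  refine Metric.tendstoUniformlyOn_iff.2 fun δ hδ => ?_
  have hC : Tendsto (fun ε : G => C * ‖ε‖) (𝓝 0) (𝓝 0) := by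
    simpa using (tendsto_const_nhds (x := C)).mul (tendsto_norm_zero (E := G))
  filter_upwards [hl (hC.eventually (gt_mem_nhds hδ)), hl (ball_mem_nhds (0 : G) hρ)]
    with ε hCε hε x hx
  rw [dist_comm]
  exact (h ε (mem_ball_zero_iff.1 hε) x hx).trans_lt hCε

lemma dslope_comp_add_smul_of_ne {f : E → F} {w v : E} {ε : ℂ} (hε : ε ≠ 0) :
    dslope (fun η : ℂ => f (w + η • v)) 0 ε = ε⁻¹ • (f (w + ε • v) - f w) := by
  rw [dslope_of_ne _ hε, slope_def_module]
  simp

lemma exists_dist_dslope_fderiv_le [CompleteSpace F] {f : E → F} {U : Set E}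
    (hf : DifferentiableOn ℂ f U) (hU : IsOpen U) {w₀ : E} (hw₀ : w₀ ∈ U) (v : E) :
    ∃ ρ > 0, ∃ C : ℝ, ∀ w ∈ ball w₀ ρ, ∀ ε : ℂ, ‖ε‖ < ρ → w + ε • v ∈ U ∧
      dist (dslope (fun η : ℂ => f (w + η • v)) 0 ε) (fderiv ℂ f w v) ≤ C * ‖ε‖ := by
  obtain ⟨r₀, hr₀, hr₀U⟩ := Metric.isOpen_iff.1 hU w₀ hw₀
  obtain ⟨r₁, hr₁, hr₁f⟩ := Metric.continuousAt_iff.1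
    (hf.continuousOn.continuousAt (hU.mem_nhds hw₀)) 1 one_pos
  -- On `ball w₀ (min r₀ r₁)` the map `f` is defined and bounded, so Schwarz applies to the slices.
  set r := min r₀ r₁ / 2
  have hr : 0 < r := by positivity
  set ρ := r / (‖v‖ + 1)
  have hρ : 0 < ρ := by positivity
  have hmem : ∀ w ∈ ball w₀ ρ, ∀ η : ℂ, ‖η‖ < ρ → w + η • v ∈ ball w₀ (min r₀ r₁) := by
    intro w hw η hη
    have hρr : ρ * (‖v‖ + 1) = r := div_mul_cancel₀ r (by positivity)
    have hηv : ‖η • v‖ < r := by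
      rw [norm_smul]; nlinarith [norm_nonneg v, norm_nonneg η, mem_ball.1 hw]
    have hρr' : ρ ≤ r := by
      rw [← hρr]; nlinarith [norm_nonneg v]
    rw [mem_ball]
    calc dist (w + η • v) w₀ ≤ ‖η • v‖ + dist w w₀ := by
          rw [add_comm w, dist_eq_norm, dist_eq_norm, add_sub_assoc]; exact norm_add_le _ _
      _ < r + r := add_lt_add hηv ((mem_ball.1 hw).trans_le hρr')
      _ = min r₀ r₁ := by ring
  have hmemU : ∀ w ∈ ball w₀ ρ, ∀ η : ℂ, ‖η‖ < ρ → w + η • v ∈ U := fun w hw η hη =>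
    hr₀U (ball_subset_ball (min_le_left _ _) (hmem w hw η hη))
  refine ⟨ρ, hρ, 2 * 2 / ρ ^ 2, fun w hw ε hε => ⟨hmemU w hw ε hε, ?_⟩⟩
  have hwU : w ∈ U := by simpa using hmemU w hw 0 (by simpa using hρ)
  set φ : ℂ → F := fun η => f (w + η • v)
  have hφ_diff : DifferentiableOn ℂ φ (ball 0 ρ) := fun η hη =>
    ((hf.differentiableAt (hU.mem_nhds (hmemU w hw η (mem_ball_zero_iff.1 hη)))).comp η
      ((differentiableAt_id.smul_const v).const_add w)).differentiableWithinAt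
  have hφ_maps : MapsTo φ (ball 0 ρ) (closedBall (φ 0) 2) := by
    have hclose : ∀ η : ℂ, ‖η‖ < ρ → dist (φ η) (f w₀) < 1 := fun η hη =>
      hr₁f ((mem_ball.1 (hmem w hw η hη)).trans_le (min_le_right _ _))
    intro η hη
    rw [mem_closedBall]
    linarith [dist_triangle_right (φ η) (φ 0) (f w₀), hclose η (mem_ball_zero_iff.1 hη),
      hclose 0 (by simpa using hρ)]
  have hφ_deriv : deriv φ 0 = fderiv ℂ f w v := by
    have hf' : HasFDerivAt f (fderiv ℂ f w) (w + (0 : ℂ) • v) := by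
      rw [zero_smul, add_zero]; exact (hf.differentiableAt (hU.mem_nhds hwU)).hasFDerivAt
    exact (hf'.comp_hasDerivAt (0 : ℂ)
      (((hasDerivAt_id' (0 : ℂ)).smul_const v).const_add w)).deriv.trans (by simp)
  have h := dist_dslope_deriv_le_of_mapsTo_ball hφ_diff hφ_maps (mem_ball_zero_iff.2 hε)
  rwa [hφ_deriv, dist_zero_right] at h

variable {f : E → F} {U : Set E}

theorem DifferentiableOn.continuousOn_fderiv_apply [CompleteSpace F]
    (hf : DifferentiableOn ℂ f U) (hU : IsOpen U) (v : E) :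
    ContinuousOn (fun w => fderiv ℂ f w v) U := by
  intro w₀ hw₀
  obtain ⟨ρ, hρ, C, hC⟩ := exists_dist_dslope_fderiv_le hf hU hw₀ v
  have hT : TendstoUniformlyOn (fun ε w => dslope (fun η : ℂ => f (w + η • v)) 0 ε)
      (fun w => fderiv ℂ f w v) (𝓝[≠] 0) (ball w₀ ρ) :=
    tendstoUniformlyOn_nhds_zero_of_dist_le nhdsWithin_le_nhds hρ fun ε hε w hw =>
      (hC w hw ε hε).2
  have hcont : ∀ᶠ ε in 𝓝[≠] (0 : ℂ),
      ContinuousOn (fun w => dslope (fun η : ℂ => f (w + η • v)) 0 ε) (ball w₀ ρ) := by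
    filter_upwards [self_mem_nhdsWithin, nhdsWithin_le_nhds (ball_mem_nhds (0 : ℂ) hρ)]
      with ε hε0 hερ
    have hερ : ‖ε‖ < ρ := mem_ball_zero_iff.1 hερ
    simp_rw [dslope_comp_add_smul_of_ne hε0]
    refine ContinuousOn.const_smul (ContinuousOn.sub ?_ ?_) _
    · exact hf.continuousOn.comp (continuous_id.add continuous_const).continuousOn
        fun w hw => (hC w hw ε hερ).1
    · exact hf.continuousOn.mono fun w hw => by simpa using (hC w hw 0 (by simpa using hρ)).1
  exact ((hT.continuousOn hcont.frequently).continuousAt (ball_mem_nhds w₀ hρ)).continuousWithinAt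

theorem DifferentiableOn.differentiableOn_fderiv_apply_comp [CompleteSpace F]
    (hf : DifferentiableOn ℂ f U) (hU : IsOpen U) (v : E) {γ : ℂ → E} (hγ : Differentiable ℂ γ) :
    DifferentiableOn ℂ (fun ξ => fderiv ℂ f (γ ξ) v) (γ ⁻¹' U) := by
  intro ξ₀ hξ₀
  obtain ⟨ρ, hρ, C, hC⟩ := exists_dist_dslope_fderiv_le hf hU hξ₀ v
  have hS : IsOpen (γ ⁻¹' ball (γ ξ₀) ρ) := isOpen_ball.preimage hγ.continuous
  have hT := (tendstoUniformlyOn_nhds_zero_of_dist_le (l := 𝓝[≠] 0) nhdsWithin_le_nhds hρ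
    fun ε hε w hw => (hC w hw ε hε).2).comp γ
  have hdiff : ∀ᶠ ε in 𝓝[≠] (0 : ℂ), DifferentiableOn ℂ
      ((fun w => dslope (fun η : ℂ => f (w + η • v)) 0 ε) ∘ γ) (γ ⁻¹' ball (γ ξ₀) ρ) := by
    filter_upwards [self_mem_nhdsWithin, nhdsWithin_le_nhds (ball_mem_nhds (0 : ℂ) hρ)]
      with ε hε0 hερ
    have hερ : ‖ε‖ < ρ := mem_ball_zero_iff.1 hερ
    intro ξ hξ
    have h₁ : γ ξ + ε • v ∈ U := (hC _ hξ ε hερ).1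
    have h₂ : γ ξ ∈ U := by simpa using (hC _ hξ 0 (by simpa using hρ)).1
    simp only [Function.comp_def, dslope_comp_add_smul_of_ne hε0]
    exact ((((hf.differentiableAt (hU.mem_nhds h₁)).comp ξ ((hγ ξ).add_const _)).sub
      ((hf.differentiableAt (hU.mem_nhds h₂)).comp ξ (hγ ξ))).const_smul _).differentiableWithinAt
  exact ((hT.tendstoLocallyUniformlyOn.differentiableOn hdiff hS).differentiableAt
    (hS.mem_nhds (mem_ball_self hρ))).differentiableWithinAt

end Regularity

lemma sameRay_of_le_sum_norm_add {ι E : Type*} [Fintype ι] [NormedAddCommGroup E]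
    [NormedSpace ℝ E] [StrictConvexSpace ℝ E] {y : ι → ℝ} (hy : ∀ j, 0 < y j) {a b : ι → E}
    {A B t : ℝ} (ht : t ∈ Ioo (0 : ℝ) 1) (hA : ∑ j, y j * ‖a j‖ ≤ A)
    (hB : ∑ j, y j * ‖b j‖ ≤ B)
    (hAB : t * A + (1 - t) * B ≤ ∑ j, y j * ‖t • a j + (1 - t) • b j‖)
    (j : ι) : SameRay ℝ (a j) (b j) := by
  obtain ⟨ht₀, ht₁⟩ := ht
  set d : ι → ℝ := fun j => y j * (‖t • a j‖ + ‖(1 - t) • b j‖ - ‖t • a j + (1 - t) • b j‖)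
  have hd : ∀ j, 0 ≤ d j := fun j => mul_nonneg (hy j).le (sub_nonneg.2 (norm_add_le _ _))
  have hsum : ∑ j, d j = t * ∑ j, y j * ‖a j‖ + (1 - t) * ∑ j, y j * ‖b j‖
      - ∑ j, y j * ‖t • a j + (1 - t) • b j‖ := by
    simp only [d, norm_smul_of_nonneg ht₀.le, norm_smul_of_nonneg (sub_nonneg.2 ht₁.le),
      Finset.mul_sum, ← Finset.sum_add_distrib, ← Finset.sum_sub_distrib]
    exact Finset.sum_congr rfl fun j _ => by ring
  have hdj : d j = 0 := (Finset.sum_eq_zero_iff_of_nonneg fun j _ => hd j).1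
    (le_antisymm (by nlinarith) (Finset.sum_nonneg fun j _ => hd j)) j (Finset.mem_univ j)
  have hray : SameRay ℝ (t • a j) ((1 - t) • b j) := by
    rw [sameRay_iff_norm_add]
    have := (mul_eq_zero.1 hdj).resolve_left (hy j).ne'
    linarith
  simpa [smul_smul, ht₀.ne', (sub_pos.2 ht₁).ne'] using
    (hray.pos_smul_left (inv_pos.2 ht₀)).pos_smul_right (inv_pos.2 (sub_pos.2 ht₁))

lemma SameRay.im_sub_div_eq_zero {a b : ℂ} (h : SameRay ℝ a b) (t : ℝ) :
    ((a - b) / (t * a + (1 - t) * b)).im = 0 := by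
  obtain ⟨u, α, β, -, -, -, rfl, rfl⟩ := h.exists_eq_smul
  rcases eq_or_ne u 0 with rfl | hu
  · simp
  simp only [real_smul]
  rw [show (α : ℂ) * u - β * u = ((α - β : ℝ) : ℂ) * u by push_cast; ring,
    show (t : ℂ) * (α * u) + (1 - t) * (β * u) = ((t * α + (1 - t) * β : ℝ) : ℂ) * u by
      push_cast; ring,
    mul_div_mul_right _ _ hu, ← ofReal_div, ofReal_im]

lemma eq_of_forall_update_eq {ι α β : Type*} [Fintype ι] [DecidableEq ι] {D : ι → Set α}
    {F : (ι → α) → β} (hF : ∀ b ∈ univ.pi D, ∀ k, ∀ ξ ∈ D k, F (update b k ξ) = F b)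
    {c w : ι → α} (hc : c ∈ univ.pi D) (hw : w ∈ univ.pi D) : F w = F c := by
  have key : ∀ s : Finset ι, F (s.piecewise w c) = F c := by
    intro s
    induction s using Finset.induction_on with
    | empty => simp
    | insert k s _ ih =>
      rw [Finset.piecewise_insert, hF _ (s.piecewise_mem_set_pi hw hc) k (w k)
        (hw k (mem_univ k)), ih]
  simpa using key Finset.univ

lemma DifferentiableOn.exists_eq_const_of_im_eq_zero {u : ℂ → ℂ} {U : Set ℂ}
    (hu : DifferentiableOn ℂ u U) (hU : IsOpen U) (hUc : IsPreconnected U)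
    (him : ∀ ζ ∈ U, (u ζ).im = 0) : ∃ c, ∀ ζ ∈ U, u ζ = c := by
  rcases U.eq_empty_or_nonempty with rfl | ⟨ζ₀, hζ₀⟩
  · exact ⟨0, by simp⟩
  refine ((hu.analyticOnNhd hU).is_constant_or_isOpen hUc).resolve_right fun hopen => ?_
  have himage : im '' (u '' U) = {0} := by
    refine eq_singleton_iff_unique_mem.2 ⟨⟨u ζ₀, mem_image_of_mem u hζ₀, him ζ₀ hζ₀⟩, ?_⟩
    rintro _ ⟨_, ⟨ζ, hζ, rfl⟩, rfl⟩
    exact him ζ hζ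
  exact not_isOpen_singleton (0 : ℝ) (himage ▸ isOpenMap_im _ (hopen U subset_rfl hU))

theorem DifferentiableOn.eq_of_eventually_eq_of_convex {E F : Type*} [NormedAddCommGroup E]
    [NormedSpace ℂ E] [NormedAddCommGroup F] [NormedSpace ℂ F] [CompleteSpace F] {h : E → F}
    {U : Set E} (hh : DifferentiableOn ℂ h U) (hU : IsOpen U) (hUc : Convex ℝ U) {z₀ : E}
    (hz₀ : z₀ ∈ U) (hloc : ∀ᶠ w in 𝓝 z₀, h w = h z₀) {z : E} (hz : z ∈ U) : h z = h z₀ := by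
  set L : ℂ → E := fun ζ => z₀ + ζ • (z - z₀)
  have hL : Differentiable ℂ L := (differentiable_id.smul_const _).const_add _
  have hD : IsOpen (L ⁻¹' U) := hU.preimage hL.continuous
  have hDc : Convex ℝ (L ⁻¹' U) := (hUc.translate_preimage_right z₀).is_linear_preimage
    ⟨fun x y => add_smul x y _, fun c x => smul_assoc c x _⟩
  have hψ : AnalyticOnNhd ℂ (h ∘ L) (L ⁻¹' U) :=
    (hh.comp hL.differentiableOn (mapsTo_preimage L U)).analyticOnNhd hD
  have hL₀ : L 0 = z₀ := by simp [L]
  have hψ₀ : h ∘ L =ᶠ[𝓝 0] fun _ => h z₀ := by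
    have := hL.continuous.tendsto 0
    rw [hL₀] at this
    exact this.eventually hloc
  have := hψ.eqOn_of_preconnected_of_eventuallyEq analyticOnNhd_const hDc.isPreconnected
    (show (0 : ℂ) ∈ L ⁻¹' U by simpa [hL₀] using hz₀) hψ₀
  simpa [L] using this (show (1 : ℂ) ∈ L ⁻¹' U by simpa [L] using hz)

section SeveralVariables

variable {ι : Type*} [Fintype ι] [DecidableEq ι]

lemma eq_of_im_eq_zero_of_differentiableOn_update {u : (ι → ℂ) → ℂ} {z₀ : ι → ℂ} {r : ℝ}
    (hu : ∀ b k, DifferentiableOn ℂ (fun ξ => u (update b k ξ)) (update b k ⁻¹' ball z₀ r))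
    (him : ∀ w ∈ ball z₀ r, (u w).im = 0) {w : ι → ℂ} (hw : w ∈ ball z₀ r) : u w = u z₀ := by
  have hr : 0 < r := pos_of_mem_ball hw
  rw [ball_pi z₀ hr] at hu him hw
  refine eq_of_forall_update_eq (fun b hb k ξ hξ => ?_) (fun i _ => mem_ball_self hr) hw
  have hslice : ball (z₀ k) r ⊆ update b k ⁻¹' univ.pi fun i => ball (z₀ i) r :=
    fun ζ hζ => (update_mem_pi_iff_of_mem hb).2 fun _ => hζ
  obtain ⟨c, hc⟩ := ((hu b k).mono hslice).exists_eq_const_of_im_eq_zero isOpen_ball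
    (convex_ball _ _).isPreconnected fun ζ hζ => him _ (hslice hζ)
  rw [hc ξ hξ, ← hc (b k) (hb k (mem_univ k)), update_eq_self]

lemma eventually_eq_of_im_fderiv_div_eq_zero {h g : (ι → ℂ) → ℂ} {U : Set (ι → ℂ)}
    (hU : IsOpen U) (hh : DifferentiableOn ℂ h U) (hg : DifferentiableOn ℂ g U) {z₀ : ι → ℂ}
    (hz₀ : z₀ ∈ U) (hh₀ : ∀ j, fderiv ℂ h z₀ (Pi.single j 1) = 0)
    (hg₀ : ∀ j, fderiv ℂ g z₀ (Pi.single j 1) ≠ 0)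
    (hreal : ∀ w ∈ U, ∀ j, (fderiv ℂ h w (Pi.single j 1) / fderiv ℂ g w (Pi.single j 1)).im = 0) :
    ∀ᶠ w in 𝓝 z₀, h w = h z₀ := by
  obtain ⟨r, hr, hball⟩ := Metric.eventually_nhds_iff_ball.1 ((hU.eventually_mem hz₀).and
    (eventually_all.2 fun j => ((hg.continuousOn_fderiv_apply hU _).continuousAt
      (hU.mem_nhds hz₀)).eventually_ne (hg₀ j)))
  have hrU : ball z₀ r ⊆ U := fun w hw => (hball w hw).1
  have hQ : ∀ w ∈ ball z₀ r, ∀ j, fderiv ℂ g w (Pi.single j 1) ≠ 0 := fun w hw => (hball w hw).2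
  have hupdate : ∀ (b : ι → ℂ) k, Differentiable ℂ (update b k) := fun b k ξ =>
    (hasFDerivAt_update b ξ).differentiableAt
  have hP : ∀ w ∈ ball z₀ r, ∀ j, fderiv ℂ h w (Pi.single j 1) = 0 := by
    intro w hw j
    have hu := eq_of_im_eq_zero_of_differentiableOn_update
      (u := fun w => fderiv ℂ h w (Pi.single j 1) / fderiv ℂ g w (Pi.single j 1))
      (fun b k => ((hh.differentiableOn_fderiv_apply_comp hU _ (hupdate b k)).mono
        (preimage_mono hrU)).div ((hg.differentiableOn_fderiv_apply_comp hU _ (hupdate b k)).mono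
        (preimage_mono hrU)) fun ξ hξ => hQ _ hξ j)
      (fun w hw => hreal w (hrU hw) j) hw
    simp only [hh₀ j, zero_div] at hu
    exact (div_eq_zero_iff.1 hu).resolve_right (hQ w hw j)
  have hderiv : EqOn (fderiv ℂ h) 0 (ball z₀ r) := fun w hw => ContinuousLinearMap.ext fun v => by
    simp [ContinuousLinearMap.apply_eq_sum_mul_apply_single _ v, hP w hw]
  filter_upwards [ball_mem_nhds z₀ hr] with w hw
  exact isOpen_ball.is_const_of_fderiv_eq_zero (convex_ball z₀ r).isPreconnected (hh.mono hrU)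
    hderiv hw (mem_ball_self hr)

theorem im_fderiv_sub_div_fderiv_eq_zero {f₁ f₂ g : (ι → ℂ) → ℂ}
    (hf₁ : DifferentiableOn ℂ f₁ (upperHalfSpace ι))
    (hf₁maps : ∀ z ∈ upperHalfSpace ι, 0 < (f₁ z).im)
    (hf₂ : DifferentiableOn ℂ f₂ (upperHalfSpace ι))
    (hf₂maps : ∀ z ∈ upperHalfSpace ι, 0 < (f₂ z).im) {t : ℝ} (ht : t ∈ Ioo (0 : ℝ) 1)
    (hconv : ∀ z ∈ upperHalfSpace ι, g z = t * f₁ z + (1 - t) * f₂ z)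
    {w : ι → ℂ} (hw : w ∈ upperHalfSpace ι)
    (hgext : ∑ j, (w j).im * ‖fderiv ℂ g w (Pi.single j 1)‖ = (g w).im) (j : ι) :
    (fderiv ℂ (fun z => f₁ z - f₂ z) w (Pi.single j 1) / fderiv ℂ g w (Pi.single j 1)).im = 0 := by
  have hw' := (isOpen_upperHalfSpace ι).mem_nhds hw
  have hd₁ := hf₁.differentiableAt hw'
  have hd₂ := hf₂.differentiableAt hw'
  have hg' : ∀ i, fderiv ℂ g w (Pi.single i 1)
      = t • fderiv ℂ f₁ w (Pi.single i 1) + (1 - t) • fderiv ℂ f₂ w (Pi.single i 1) := by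
    intro i
    have hsum : HasFDerivAt (fun z => t * f₁ z + (1 - t) * f₂ z)
        ((t : ℂ) • fderiv ℂ f₁ w + (1 - (t : ℂ)) • fderiv ℂ f₂ w) w :=
      (hd₁.hasFDerivAt.const_mul _).add (hd₂.hasFDerivAt.const_mul _)
    rw [(eventuallyEq_of_mem hw' hconv).fderiv_eq, hsum.fderiv]
    simp [real_smul]
  have him : (g w).im = t * (f₁ w).im + (1 - t) * (f₂ w).im := by
    rw [hconv w hw]; simp
  have hray := sameRay_of_le_sum_norm_add hw ht
    (sum_im_mul_norm_fderiv_single_le_im hf₁ hf₁maps hw)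
    (sum_im_mul_norm_fderiv_single_le_im hf₂ hf₂maps hw)
    (by simp only [← hg', hgext, him, le_refl]) j
  rw [fderiv_fun_sub hd₁ hd₂, sub_apply, hg' j]
  simpa [real_smul] using hray.im_sub_div_eq_zero t

end SeveralVariables

theorem extremal_is_extreme_point_general {n : ℕ} (g f₁ f₂ : (Fin n → ℂ) → ℂ)
    (hg : DifferentiableOn ℂ g {z : Fin n → ℂ | ∀ j, 0 < (z j).im})
    (hgB : ∀ l : ℂ, 0 < l.im → ∀ j,
      fderiv ℂ g (fun _ => l) (Pi.single j 1) = (1 / n : ℂ))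
    (hgext : ∀ z : Fin n → ℂ, (∀ j, 0 < (z j).im) →
      ∑ j, (z j).im * ‖fderiv ℂ g z (Pi.single j 1)‖ = (g z).im)
    (hf₁ : DifferentiableOn ℂ f₁ {z : Fin n → ℂ | ∀ j, 0 < (z j).im})
    (hf₁maps : ∀ z : Fin n → ℂ, (∀ j, 0 < (z j).im) → 0 < (f₁ z).im)
    (hf₁A : ∀ l : ℂ, 0 < l.im → f₁ (fun _ => l) = l)
    (hf₁B : ∀ l : ℂ, 0 < l.im → ∀ j,
      fderiv ℂ f₁ (fun _ => l) (Pi.single j 1) = (1 / n : ℂ))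
    (hf₂ : DifferentiableOn ℂ f₂ {z : Fin n → ℂ | ∀ j, 0 < (z j).im})
    (hf₂maps : ∀ z : Fin n → ℂ, (∀ j, 0 < (z j).im) → 0 < (f₂ z).im)
    (hf₂A : ∀ l : ℂ, 0 < l.im → f₂ (fun _ => l) = l)
    (hf₂B : ∀ l : ℂ, 0 < l.im → ∀ j,
      fderiv ℂ f₂ (fun _ => l) (Pi.single j 1) = (1 / n : ℂ))
    (t : ℝ) (ht : t ∈ Set.Ioo (0 : ℝ) 1)
    (hconv : ∀ z : Fin n → ℂ, (∀ j, 0 < (z j).im) →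
      g z = (t : ℂ) * f₁ z + ((1 : ℂ) - t) * f₂ z) :
    ∀ z : Fin n → ℂ, (∀ j, 0 < (z j).im) → f₁ z = g z ∧ f₂ z = g z := by
  have hI : (0 : ℝ) < I.im := by simp
  have hz₀ : (fun _ => I) ∈ upperHalfSpace (Fin n) := fun _ => hI
  have hΩ := isOpen_upperHalfSpace (Fin n)
  have hreal := fun w hw => im_fderiv_sub_div_fderiv_eq_zero hf₁ hf₁maps hf₂ hf₂maps ht hconv hw
    (hgext w hw)
  have hh₀ : ∀ j, fderiv ℂ (fun z => f₁ z - f₂ z) (fun _ => I) (Pi.single j 1) = 0 := fun j => by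
    rw [fderiv_fun_sub (hf₁.differentiableAt (hΩ.mem_nhds hz₀))
      (hf₂.differentiableAt (hΩ.mem_nhds hz₀)), sub_apply, hf₁B I hI, hf₂B I hI, sub_self]
  have hg₀ : ∀ j, fderiv ℂ g (fun _ => I) (Pi.single j 1) ≠ 0 := fun j => by
    rw [hgB I hI]
    exact one_div_ne_zero (Nat.cast_ne_zero.2 (Fin.pos j).ne')
  have hloc := eventually_eq_of_im_fderiv_div_eq_zero hΩ (hf₁.sub hf₂) hg hz₀ hh₀ hg₀ hreal
  intro z hz
  have h₁₂ : f₁ z = f₂ z := by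
    have := (hf₁.sub hf₂).eq_of_eventually_eq_of_convex hΩ (convex_upperHalfSpace _) hz₀ hloc hz
    rwa [Pi.sub_apply, Pi.sub_apply, hf₁A I hI, hf₂A I hI, sub_self, sub_eq_zero] at this
  rw [hconv z hz, h₁₂]
  constructor <;> ring

/-- An everywhere-extremal `g` in the class `𝒞` (identity on the diagonal,
diagonal partials all equal to `1/n`) is an extreme point of `𝒞`: if `g = t f₁ + (1-t) f₂`
with `t ∈ (0,1)` and `f₁, f₂ ∈ 𝒞`, then `f₁ = f₂ = g` on `ℍⁿ`. -/
theorem extremal_is_extreme_point {n : ℕ} (g f₁ f₂ : (Fin n → ℂ) → ℂ)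
    (hg : DifferentiableOn ℂ g {z : Fin n → ℂ | ∀ j, 0 < (z j).im})
    (hgmaps : ∀ z : Fin n → ℂ, (∀ j, 0 < (z j).im) → 0 < (g z).im)
    (hgA : ∀ l : ℂ, 0 < l.im → g (fun _ => l) = l)
    (hgB : ∀ l : ℂ, 0 < l.im → ∀ j,
      fderiv ℂ g (fun _ => l) (Pi.single j 1) = (1 / n : ℂ))
    (hgext : ∀ z : Fin n → ℂ, (∀ j, 0 < (z j).im) →
      ∑ j, (z j).im * ‖fderiv ℂ g z (Pi.single j 1)‖ = (g z).im)
    (hf₁ : DifferentiableOn ℂ f₁ {z : Fin n → ℂ | ∀ j, 0 < (z j).im})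
    (hf₁maps : ∀ z : Fin n → ℂ, (∀ j, 0 < (z j).im) → 0 < (f₁ z).im)
    (hf₁A : ∀ l : ℂ, 0 < l.im → f₁ (fun _ => l) = l)
    (hf₁B : ∀ l : ℂ, 0 < l.im → ∀ j,
      fderiv ℂ f₁ (fun _ => l) (Pi.single j 1) = (1 / n : ℂ))
    (hf₂ : DifferentiableOn ℂ f₂ {z : Fin n → ℂ | ∀ j, 0 < (z j).im})
    (hf₂maps : ∀ z : Fin n → ℂ, (∀ j, 0 < (z j).im) → 0 < (f₂ z).im)
    (hf₂A : ∀ l : ℂ, 0 < l.im → f₂ (fun _ => l) = l)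
    (hf₂B : ∀ l : ℂ, 0 < l.im → ∀ j,
      fderiv ℂ f₂ (fun _ => l) (Pi.single j 1) = (1 / n : ℂ))
    (t : ℝ) (ht : t ∈ Set.Ioo (0 : ℝ) 1)
    (hconv : ∀ z : Fin n → ℂ, (∀ j, 0 < (z j).im) →
      g z = (t : ℂ) * f₁ z + ((1 : ℂ) - t) * f₂ z) :
    ∀ z : Fin n → ℂ, (∀ j, 0 < (z j).im) → f₁ z = g z ∧ f₂ z = g z :=
  extremal_is_extreme_point_general g f₁ f₂ hg hgB hgext hf₁ hf₁maps hf₁A hf₁B hf₂ hf₂maps hf₂A hf₂B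
    t ht hconv
end

section
/- Let f : ℍ² → ℍ be holomorphic with f(λ,λ) = λ for all λ ∈ ℍ. Then ∂f/∂z(λ,λ) is a constant α ∈ [0,1] independent of λ, and ∂f/∂w(λ,λ) = 1 − α for all λ. -/
/-!
Differentiating `f (λ, λ) = λ` gives `∂₁f + ∂₂f = 1` on the diagonal. Pulling `f` back to the
bidisc and pushing it forward to the disc by Cayley transforms, the Schwarz lemma applied along
the rotated diagonal `t ↦ (u t, v t)` gives the Schwarz–Pick inequality
`Im z ‖∂₁f‖ + Im w ‖∂₂f‖ ≤ Im f (z, w)`. On the diagonal this reads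
`‖∂₁f‖ + ‖∂₂f‖ ≤ 1 = ∂₁f + ∂₂f`, which forces both partials to be real and nonnegative.

The diagonal partial `λ ↦ ∂₁f (λ, λ)` is holomorphic: write it as a Cauchy integral and
differentiate under the integral sign, the derivative of the integrand being bounded by a Cauchy
estimate. A holomorphic function with real values on the connected half-plane is constant by the
open mapping theorem.
-/

open Complex ComplexConjugate Metric Set Filter Topology MeasureTheory Real
open scoped ComplexOrder

section PartialDeriv

variable {𝕜 E : Type*} [NontriviallyNormedField 𝕜] [NormedAddCommGroup E] [NormedSpace 𝕜 E]
  {F : 𝕜 × 𝕜 → E} {L : 𝕜 × 𝕜 →L[𝕜] E} {z w : 𝕜}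

theorem HasFDerivAt.hasDerivAt_comp_prodMk_const (h : HasFDerivAt F L (z, w)) :
    HasDerivAt (fun ζ => F (ζ, w)) (L (1, 0)) z :=
  h.comp_hasDerivAt z ((hasDerivAt_id z).prodMk (hasDerivAt_const z w))

theorem HasFDerivAt.hasDerivAt_comp_const_prodMk (h : HasFDerivAt F L (z, w)) :
    HasDerivAt (fun ζ => F (z, ζ)) (L (0, 1)) w :=
  h.comp_hasDerivAt w ((hasDerivAt_const w z).prodMk (hasDerivAt_id w))

theorem HasFDerivAt.hasDerivAt_comp_diag (h : HasFDerivAt F L (z, z)) :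
    HasDerivAt (fun ζ => F (ζ, ζ)) (L (1, 1)) z :=
  h.comp_hasDerivAt (f := fun ζ => (ζ, ζ)) z ((hasDerivAt_id z).prodMk (hasDerivAt_id z))

theorem DifferentiableAt.deriv_comp_prodMk_const_add_deriv_comp_const_prodMk
    (h : DifferentiableAt 𝕜 F (z, z)) :
    deriv (fun ζ => F (ζ, z)) z + deriv (fun ζ => F (z, ζ)) z
      = deriv (fun ζ => F (ζ, ζ)) z := by
  have hF := h.hasFDerivAt
  rw [hF.hasDerivAt_comp_prodMk_const.deriv, hF.hasDerivAt_comp_const_prodMk.deriv,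
    hF.hasDerivAt_comp_diag.deriv, ← map_add, Prod.mk_add_mk, add_zero, zero_add]

end PartialDeriv

theorem Complex.nonneg_of_add_eq_one_of_norm_add_norm_le {a b : ℂ} (hab : a + b = 1)
    (hn : ‖a‖ + ‖b‖ ≤ 1) : 0 ≤ a := by
  have hre : a.re + b.re = 1 := by simpa using congrArg re hab
  rw [← re_eq_norm]
  linarith [re_le_norm a, re_le_norm b]

theorem Complex.exists_norm_eq_one_mul_eq_norm (a : ℂ) : ∃ u : ℂ, ‖u‖ = 1 ∧ u * a = ‖a‖ := by
  refine ⟨exp (↑(-arg a) * I), norm_exp_ofReal_mul_I _, ?_⟩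
  calc exp (↑(-arg a) * I) * a = exp (↑(-arg a) * I) * (‖a‖ * exp (arg a * I)) := by
        rw [norm_mul_exp_arg_mul_I]
    _ = ‖a‖ := by
        rw [mul_left_comm, ← exp_add, ofReal_neg, neg_mul, neg_add_cancel, exp_zero, mul_one]

theorem Complex.sub_conj_ne_zero_of_im_pos {a z : ℂ} (ha : 0 < a.im) (hz : 0 < z.im) :
    z - conj a ≠ 0 := by
  intro h
  have := congrArg im h
  simp only [sub_im, conj_im, zero_im] at this
  linarith

section Cayley

variable {a z t : ℂ}

noncomputable def halfPlaneToDisc (a z : ℂ) : ℂ := (z - a) / (z - conj a)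

noncomputable def discToHalfPlane (a t : ℂ) : ℂ := (a - conj a * t) / (1 - t)

theorem norm_halfPlaneToDisc_lt_one (ha : 0 < a.im) (hz : 0 < z.im) :
    ‖halfPlaneToDisc a z‖ < 1 := by
  rw [halfPlaneToDisc, norm_div, div_lt_one (norm_pos_iff.mpr (sub_conj_ne_zero_of_im_pos ha hz)),
    ← sq_lt_sq₀ (norm_nonneg _) (norm_nonneg _), Complex.sq_norm, Complex.sq_norm, normSq_apply,
    normSq_apply]
  simp only [sub_re, sub_im, conj_re, conj_im]
  nlinarith

theorem halfPlaneToDisc_self : halfPlaneToDisc a a = 0 := by simp [halfPlaneToDisc]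

theorem differentiableAt_halfPlaneToDisc (ha : 0 < a.im) (hz : 0 < z.im) :
    DifferentiableAt ℂ (halfPlaneToDisc a) z :=
  (differentiableAt_id.sub_const a).div (differentiableAt_id.sub_const _)
    (sub_conj_ne_zero_of_im_pos ha hz)

theorem hasDerivAt_halfPlaneToDisc_self (ha : 0 < a.im) :
    HasDerivAt (halfPlaneToDisc a) (a - conj a)⁻¹ a := by
  have hne := sub_conj_ne_zero_of_im_pos ha ha
  refine (((hasDerivAt_id' a).sub_const a).div ((hasDerivAt_id' a).sub_const (conj a))
    hne).congr_deriv ?_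
  field_simp
  ring

theorem im_discToHalfPlane_pos (ha : 0 < a.im) (ht : ‖t‖ < 1) :
    0 < (discToHalfPlane a t).im := by
  have ht2 : t.re ^ 2 + t.im ^ 2 < 1 := by
    rw [← sq_lt_one_iff₀ (norm_nonneg t), Complex.sq_norm, normSq_apply] at ht
    linarith
  have hden : 0 < normSq (1 - t) := by
    rw [normSq_pos, sub_ne_zero]
    rintro rfl
    simp at ht
  rw [discToHalfPlane, div_im, div_sub_div_same, lt_div_iff₀ hden]
  simp only [sub_re, sub_im, mul_re, mul_im, conj_re, conj_im, one_re, one_im]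
  nlinarith

theorem discToHalfPlane_zero : discToHalfPlane a 0 = a := by simp [discToHalfPlane]

theorem differentiableAt_discToHalfPlane (ht : t ≠ 1) :
    DifferentiableAt ℂ (discToHalfPlane a) t :=
  (differentiableAt_id.const_mul _ |>.const_sub a).div (differentiableAt_id.const_sub 1)
    (sub_ne_zero.mpr ht.symm)

theorem hasDerivAt_discToHalfPlane_mul_zero (u : ℂ) :
    HasDerivAt (fun t => discToHalfPlane a (u * t)) ((a - conj a) * u) 0 := by
  have hmul : HasDerivAt (fun t => u * t) u 0 := by
    simpa using (hasDerivAt_id' (0 : ℂ)).const_mul u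
  refine ((hmul.const_mul (conj a) |>.const_sub a).div (hmul.const_sub 1)
    (by simp)).congr_deriv ?_
  ring

end Cayley

theorem norm_deriv_le_two_mul_im_of_im_pos {g : ℂ → ℂ} (hd : DifferentiableOn ℂ g (ball 0 1))
    (hg : ∀ t ∈ ball (0 : ℂ) 1, 0 < (g t).im) : ‖deriv g 0‖ ≤ 2 * (g 0).im := by
  have hg0 := hg 0 (mem_ball_self one_pos)
  set h := fun t => halfPlaneToDisc (g 0) (g t)
  have hh_maps : MapsTo h (ball 0 1) (closedBall (h 0) 1) := fun t ht => by
    simp only [h, halfPlaneToDisc_self, mem_closedBall_zero_iff]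
    exact (norm_halfPlaneToDisc_lt_one hg0 (hg t ht)).le
  have hh_diff : DifferentiableOn ℂ h (ball 0 1) := fun t ht =>
    ((differentiableAt_halfPlaneToDisc hg0 (hg t ht)).comp t
      (hd.differentiableAt (isOpen_ball.mem_nhds ht))).differentiableWithinAt
  have hh' : HasDerivAt h ((g 0 - conj (g 0))⁻¹ * deriv g 0) 0 :=
    (hasDerivAt_halfPlaneToDisc_self hg0).comp 0
      (hd.differentiableAt (ball_mem_nhds 0 one_pos)).hasDerivAt
  have hschwarz := norm_deriv_le_one_of_mapsTo_ball hh_diff hh_maps one_pos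
  rwa [hh'.deriv, norm_mul, norm_inv, sub_conj, norm_mul, norm_I, mul_one, norm_real,
    Real.norm_of_nonneg (by positivity), inv_mul_le_one₀ (by positivity)] at hschwarz

theorem isOpen_upperHalfPlane_prod : IsOpen {p : ℂ × ℂ | 0 < p.1.im ∧ 0 < p.2.im} :=
  (isOpen_lt continuous_const (continuous_im.comp continuous_fst)).inter
    (isOpen_lt continuous_const (continuous_im.comp continuous_snd))

theorem im_mul_norm_deriv_add_im_mul_norm_deriv_le_im {F : ℂ × ℂ → ℂ}
    (hF : DifferentiableOn ℂ F {p | 0 < p.1.im ∧ 0 < p.2.im})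
    (hmaps : ∀ p : ℂ × ℂ, 0 < p.1.im → 0 < p.2.im → 0 < (F p).im)
    {z w : ℂ} (hz : 0 < z.im) (hw : 0 < w.im) :
    z.im * ‖deriv (fun ζ => F (ζ, w)) z‖ + w.im * ‖deriv (fun ζ => F (z, ζ)) w‖
      ≤ (F (z, w)).im := by
  have hFzw := (hF.differentiableAt
    (isOpen_upperHalfPlane_prod.mem_nhds (x := (z, w)) ⟨hz, hw⟩)).hasFDerivAt
  set L := fderiv ℂ F (z, w)
  rw [hFzw.hasDerivAt_comp_prodMk_const.deriv, hFzw.hasDerivAt_comp_const_prodMk.deriv]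
  -- The rotations `u`, `v` align both terms of the derivative of `F ∘ γ` along `I`.
  obtain ⟨u, hu, hua⟩ := exists_norm_eq_one_mul_eq_norm (L (1, 0))
  obtain ⟨v, hv, hvb⟩ := exists_norm_eq_one_mul_eq_norm (L (0, 1))
  set γ : ℂ → ℂ × ℂ := fun t => (discToHalfPlane z (u * t), discToHalfPlane w (v * t))
  have hγ : ∀ t ∈ ball (0 : ℂ) 1, 0 < (γ t).1.im ∧ 0 < (γ t).2.im := fun t ht => by
    rw [mem_ball_zero_iff] at ht
    exact ⟨im_discToHalfPlane_pos hz (by rwa [norm_mul, hu, one_mul]),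
      im_discToHalfPlane_pos hw (by rwa [norm_mul, hv, one_mul])⟩
  have hFγ_diff : DifferentiableOn ℂ (F ∘ γ) (ball 0 1) := by
    intro t ht
    have hne : ∀ {c : ℂ}, ‖c‖ = 1 → c * t ≠ 1 := fun hc h => by
      have := congrArg norm h
      rw [norm_mul, hc, one_mul, norm_one] at this
      exact (mem_ball_zero_iff.mp ht).ne this
    have hγd : DifferentiableAt ℂ γ t :=
      ((differentiableAt_discToHalfPlane (hne hu)).comp t
        (differentiableAt_id.const_mul u)).prodMk
      ((differentiableAt_discToHalfPlane (hne hv)).comp t (differentiableAt_id.const_mul v))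
    exact ((hF.differentiableAt (isOpen_upperHalfPlane_prod.mem_nhds (hγ t ht))).comp t
      hγd).differentiableWithinAt
  have hγ0 : γ 0 = (z, w) := by simp [γ, discToHalfPlane_zero]
  have hFγ' : HasDerivAt (F ∘ γ) (L ((z - conj z) * u, (w - conj w) * v)) 0 :=
    (hγ0 ▸ hFzw).comp_hasDerivAt 0
      ((hasDerivAt_discToHalfPlane_mul_zero u).prodMk (hasDerivAt_discToHalfPlane_mul_zero v))
  have hval : L ((z - conj z) * u, (w - conj w) * v)
      = (2 * (z.im * ‖L (1, 0)‖ + w.im * ‖L (0, 1)‖) : ℝ) * I := by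
    have hsplit : ((z - conj z) * u, (w - conj w) * v)
        = ((z - conj z) * u) • ((1 : ℂ), (0 : ℂ)) + ((w - conj w) * v) • ((0 : ℂ), (1 : ℂ)) := by
      simp
    rw [hsplit, map_add, map_smul, map_smul, smul_eq_mul, smul_eq_mul, mul_assoc, mul_assoc, hua,
      hvb, sub_conj, sub_conj]
    push_cast
    ring
  have key := norm_deriv_le_two_mul_im_of_im_pos hFγ_diff
    fun t ht => hmaps _ (hγ t ht).1 (hγ t ht).2
  rw [hFγ'.deriv, hval, norm_mul, norm_I, mul_one, norm_real, Real.norm_of_nonneg (by positivity),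
    Function.comp_apply, hγ0] at key
  linarith

theorem aestronglyMeasurable_of_hasDerivAt {𝕜 α E : Type*} [NontriviallyNormedField 𝕜]
    [NormedAddCommGroup E] [NormedSpace 𝕜 E] [MeasurableSpace α] {μ : Measure α}
    {F : 𝕜 → α → E} {F' : α → E} {x₀ : 𝕜} {s : Set 𝕜} (hs : s ∈ 𝓝 x₀)
    (hF : ∀ x ∈ s, AEStronglyMeasurable (F x) μ)
    (hF' : ∀ᵐ a ∂μ, HasDerivAt (fun x => F x a) (F' a) x₀) : AEStronglyMeasurable F' μ := by
  obtain ⟨v, hv⟩ := (𝓝[≠] x₀).exists_seq_tendsto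
  obtain ⟨N, hN⟩ := eventually_atTop.mp (hv.eventually_mem (mem_nhdsWithin_of_mem_nhds hs))
  refine aestronglyMeasurable_of_tendsto_ae atTop
    (f := fun n a => slope (fun x => F x a) x₀ (v (n + N))) (fun n => ?_) ?_
  · simp only [slope, vsub_eq_sub]
    exact ((hF _ (hN _ le_add_self)).sub (hF x₀ (mem_of_mem_nhds hs))).const_smul _
  · filter_upwards [hF'] with a ha
    exact ha.tendsto_slope.comp ((tendsto_add_atTop_iff_nat N).mpr hv)

theorem hasDerivAt_circleIntegral_of_dominated {E : Type*} [NormedAddCommGroup E]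
    [NormedSpace ℂ E] {H H' : ℂ → ℂ → E} {c l₀ : ℂ} {R ε C : ℝ} (hR : 0 ≤ R) (hε : 0 < ε)
    (hcont : ∀ l ∈ ball l₀ ε, ContinuousOn (H l) (sphere c R))
    (hderiv : ∀ l ∈ ball l₀ ε, ∀ z ∈ sphere c R, HasDerivAt (H · z) (H' l z) l)
    (hbound : ∀ l ∈ ball l₀ ε, ∀ z ∈ sphere c R, ‖H' l z‖ ≤ C) :
    HasDerivAt (fun l => ∮ z in C(c, R), H l z) (∮ z in C(c, R), H' l₀ z) l₀ := by
  have hmem : ∀ θ, circleMap c R θ ∈ sphere c R := circleMap_mem_sphere c hR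
  have hcontθ : ∀ l ∈ ball l₀ ε,
      Continuous (fun θ => deriv (circleMap c R) θ • H l (circleMap c R θ)) := by
    intro l hl
    simp only [deriv_circleMap]
    exact ((continuous_circleMap 0 R).mul continuous_const).smul
      ((hcont l hl).comp_continuous (continuous_circleMap c R) hmem)
  have hdiff : ∀ θ, ∀ l ∈ ball l₀ ε, HasDerivAt
      (fun l => deriv (circleMap c R) θ • H l (circleMap c R θ))
      (deriv (circleMap c R) θ • H' l (circleMap c R θ)) l :=
    fun θ l hl => (hderiv l hl _ (hmem θ)).const_smul _
  refine (intervalIntegral.hasDerivAt_integral_of_dominated_loc_of_deriv_le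
    (bound := fun _ => R * C) (ball_mem_nhds l₀ hε)
    (eventually_of_mem (ball_mem_nhds l₀ hε) fun l hl => (hcontθ l hl).aestronglyMeasurable)
    ((hcontθ l₀ (mem_ball_self hε)).intervalIntegrable _ _) ?_ ?_ intervalIntegrable_const
    (ae_of_all _ fun θ _ => hdiff θ)).2
  · exact aestronglyMeasurable_of_hasDerivAt (ball_mem_nhds l₀ hε)
      (fun l hl => (hcontθ l hl).aestronglyMeasurable)
      (ae_of_all _ fun θ => hdiff θ l₀ (mem_ball_self hε))
  · refine ae_of_all _ fun θ _ l hl => ?_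
    rw [norm_smul, deriv_circleMap, norm_mul, norm_circleMap_zero, norm_I, mul_one,
      abs_of_nonneg hR]
    exact mul_le_mul_of_nonneg_left (hbound l hl _ (hmem θ)) hR

theorem differentiableAt_deriv_of_eventually_differentiableAt {E : Type*} [NormedAddCommGroup E]
    [NormedSpace ℂ E] [CompleteSpace E] {G : ℂ × ℂ → E} {l₀ ζ₀ : ℂ}
    (hG : ∀ᶠ p in 𝓝 (l₀, ζ₀), DifferentiableAt ℂ G p) :
    DifferentiableAt ℂ (fun l => deriv (fun ζ => G (l, ζ)) ζ₀) l₀ := by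
  obtain ⟨ε, hε, hGε⟩ := Metric.eventually_nhds_iff.mp hG
  set r := ε / 3 with hr_def
  have hr : 0 < r := by positivity
  have hreg : ∀ l ∈ closedBall l₀ (2 * r), ∀ ζ ∈ closedBall ζ₀ r,
      DifferentiableAt ℂ G (l, ζ) := by
    intro l hl ζ hζ
    apply hGε
    rw [mem_closedBall] at hl hζ
    rw [Prod.dist_eq, max_lt_iff]
    constructor <;> simp only <;> linarith
  obtain ⟨C, hC⟩ := ((isCompact_closedBall l₀ (2 * r)).prod
    (isCompact_closedBall ζ₀ r)).exists_bound_of_continuousOn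
      (f := G) fun p hp => (hreg p.1 hp.1 p.2 hp.2).continuousAt.continuousWithinAt
  have hslice_snd : ∀ l ∈ closedBall l₀ (2 * r),
      DiffContOnCl ℂ (fun ζ => G (l, ζ)) (ball ζ₀ r) := by
    intro l hl
    refine DifferentiableOn.diffContOnCl ?_
    rw [closure_ball ζ₀ hr.ne']
    exact fun ζ hζ => ((hreg l hl ζ hζ).comp ζ
      ((differentiableAt_const l).prodMk differentiableAt_id)).differentiableWithinAt
  have hslice_fst : ∀ ζ ∈ closedBall ζ₀ r, ∀ l ∈ ball l₀ r,
      DiffContOnCl ℂ (fun l' => G (l', ζ)) (ball l r) := by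
    intro ζ hζ l hl
    refine DifferentiableOn.diffContOnCl ?_
    rw [closure_ball l hr.ne']
    refine fun l' hl' => ((hreg l' ?_ ζ hζ).comp l'
      (differentiableAt_id.prodMk (differentiableAt_const ζ))).differentiableWithinAt
    rw [mem_closedBall] at hl' ⊢
    linarith [dist_triangle l' l l₀, mem_ball.mp hl]
  have hcauchy : ∀ l ∈ ball l₀ r, deriv (fun ζ => G (l, ζ)) ζ₀
      = (2 * π * I)⁻¹ • ∮ z in C(ζ₀, r), (1 / (z - ζ₀) ^ 2) • G (l, z) := by
    intro l hl
    have hl' : l ∈ closedBall l₀ (2 * r) :=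
      closedBall_subset_closedBall (by linarith) (ball_subset_closedBall hl)
    rw [(hslice_snd l hl').deriv_eq_smul_circleIntegral hr,
      inv_smul_smul₀ (by simp [pi_ne_zero])]
  have hH := hasDerivAt_circleIntegral_of_dominated (c := ζ₀) (l₀ := l₀)
    (H := fun l z => (1 / (z - ζ₀) ^ 2) • G (l, z))
    (H' := fun l z => (1 / (z - ζ₀) ^ 2) • deriv (fun l' => G (l', z)) l)
    (C := 1 / r ^ 2 * (C / r)) hr.le hr ?_ ?_ ?_
  · exact ((hH.const_smul (2 * π * I)⁻¹).differentiableAt).congr_of_eventuallyEq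
      (eventually_of_mem (ball_mem_nhds l₀ hr) hcauchy)
  · intro l hl
    have hl' : l ∈ closedBall l₀ (2 * r) :=
      closedBall_subset_closedBall (by linarith) (ball_subset_closedBall hl)
    refine ContinuousOn.smul (continuousOn_const.div (by fun_prop) fun z hz => ?_) ?_
    · exact pow_ne_zero _ (sub_ne_zero.mpr (ne_of_mem_sphere hz hr.ne'))
    · exact (hslice_snd l hl').continuousOn.mono
        (closure_ball ζ₀ hr.ne' ▸ sphere_subset_closedBall)
  · intro l hl z hz
    exact (((hslice_fst z (sphere_subset_closedBall hz) l hl).differentiableAt isOpen_ball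
      (mem_ball_self hr)).hasDerivAt).const_smul _
  · intro l hl z hz
    rw [norm_smul, norm_div, norm_one, norm_pow, ← dist_eq_norm, mem_sphere.mp hz]
    gcongr
    refine norm_deriv_le_of_forall_mem_sphere_norm_le hr
      (hslice_fst z (sphere_subset_closedBall hz) l hl)
      fun l' hl' => hC (l', z) ⟨?_, sphere_subset_closedBall hz⟩
    rw [mem_closedBall]
    linarith [dist_triangle l' l l₀, mem_sphere.mp hl', mem_ball.mp hl]

theorem differentiableAt_deriv_comp_prodMk_self {E : Type*} [NormedAddCommGroup E]
    [NormedSpace ℂ E] [CompleteSpace E] {F : ℂ × ℂ → E} {l₀ : ℂ}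
    (hF : ∀ᶠ p in 𝓝 (l₀, l₀), DifferentiableAt ℂ F p) :
    DifferentiableAt ℂ (fun l => deriv (fun z => F (z, l)) l) l₀ := by
  set φ : ℂ × ℂ → ℂ × ℂ := fun p => (p.1 + p.2, p.1)
  have hφ : Tendsto φ (𝓝 (l₀, 0)) (𝓝 (l₀, l₀)) := by
    simpa [φ] using (show Continuous φ by fun_prop).tendsto (l₀, 0)
  have hG : ∀ᶠ p in 𝓝 (l₀, 0), DifferentiableAt ℂ (F ∘ φ) p :=
    (hφ.eventually hF).mono fun p hp => hp.comp p (by fun_prop)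
  have hshift : ∀ l, deriv (fun ζ => (F ∘ φ) (l, ζ)) 0 = deriv (fun z => F (z, l)) l :=
    fun l => by simpa using deriv_comp_const_add (fun z => F (z, l)) l 0
  simpa only [hshift] using differentiableAt_deriv_of_eventually_differentiableAt hG

theorem AnalyticOnNhd.exists_eq_ofReal_of_nonneg {A : ℂ → ℂ} {U : Set ℂ}
    (hA : AnalyticOnNhd ℂ A U) (hU : IsOpen U) (hUc : IsConnected U) (hA0 : ∀ z ∈ U, 0 ≤ A z) :
    ∃ α : ℝ, 0 ≤ α ∧ ∀ z ∈ U, A z = α := by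
  obtain ⟨c, hc⟩ :=
    hA.eq_const_of_im_eq_const (fun z hz => (nonneg_iff.mp (hA0 z hz)).2.symm) hU hUc
  obtain ⟨z₀, hz₀⟩ := hUc.nonempty
  have hc0 : 0 ≤ c := hc z₀ hz₀ ▸ hA0 z₀ hz₀
  refine ⟨c.re, (nonneg_iff.mp hc0).1, fun z hz => ?_⟩
  rw [hc z hz, ← eq_re_of_ofReal_le (r := 0) (by rwa [ofReal_zero])]

/-- Let `f : ℍ² → ℍ` be holomorphic with `f(λ,λ) = λ`. Then
`∂f/∂z(λ,λ)` is a constant `α ∈ [0,1]` independent of `λ`, and `∂f/∂w(λ,λ) = 1 − α`. -/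
theorem bidisk_diagonal_partials (f : ℂ → ℂ → ℂ)
    (hf : DifferentiableOn ℂ (fun p : ℂ × ℂ => f p.1 p.2)
      {p : ℂ × ℂ | 0 < p.1.im ∧ 0 < p.2.im})
    (hmaps : ∀ z w : ℂ, 0 < z.im → 0 < w.im → 0 < (f z w).im)
    (hdiag : ∀ l : ℂ, 0 < l.im → f l l = l) :
    ∃ α : ℝ, 0 ≤ α ∧ α ≤ 1 ∧
      ∀ l : ℂ, 0 < l.im →
        deriv (fun z => f z l) l = (α : ℂ) ∧
        deriv (fun w => f l w) l = 1 - (α : ℂ) := by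
  have hℍ : IsOpen {l : ℂ | 0 < l.im} := isOpen_lt continuous_const continuous_im
  have hf_near : ∀ l : ℂ, 0 < l.im →
      ∀ᶠ p in 𝓝 (l, l), DifferentiableAt ℂ (fun p : ℂ × ℂ => f p.1 p.2) p := fun l hl =>
    eventually_of_mem (isOpen_upperHalfPlane_prod.mem_nhds (x := (l, l)) ⟨hl, hl⟩)
      fun p hp => hf.differentiableAt (isOpen_upperHalfPlane_prod.mem_nhds hp)
  have hsum : ∀ l : ℂ, 0 < l.im →
      deriv (fun z => f z l) l + deriv (fun w => f l w) l = 1 := by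
    intro l hl
    rw [(hf_near l hl).self_of_nhds.deriv_comp_prodMk_const_add_deriv_comp_const_prodMk]
    exact ((hasDerivAt_id l).congr_of_eventuallyEq
      (eventually_of_mem (hℍ.mem_nhds hl) hdiag)).deriv
  have hnonneg : ∀ l : ℂ, 0 < l.im →
      0 ≤ deriv (fun z => f z l) l ∧ 0 ≤ deriv (fun w => f l w) l := by
    intro l hl
    have hsp := im_mul_norm_deriv_add_im_mul_norm_deriv_le_im hf (fun p => hmaps p.1 p.2) hl hl
    rw [hdiag l hl, ← mul_add, mul_le_iff_le_one_right hl] at hsp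
    exact ⟨nonneg_of_add_eq_one_of_norm_add_norm_le (hsum l hl) hsp,
      nonneg_of_add_eq_one_of_norm_add_norm_le ((add_comm _ _).trans (hsum l hl))
        ((add_comm _ _).trans_le hsp)⟩
  have hA : AnalyticOnNhd ℂ (fun l => deriv (fun z => f z l) l) {l | 0 < l.im} :=
    DifferentiableOn.analyticOnNhd (fun l hl =>
      (differentiableAt_deriv_comp_prodMk_self (hf_near l hl)).differentiableWithinAt) hℍ
  obtain ⟨α, hα0, hα⟩ := hA.exists_eq_ofReal_of_nonneg hℍ
    ((convex_halfSpace_im_gt 0).isConnected ⟨I, by simp⟩) fun l hl => (hnonneg l hl).1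
  have hβ : ∀ l : ℂ, 0 < l.im → deriv (fun w => f l w) l = 1 - α := fun l hl => by
    rw [← hα l hl]
    exact eq_sub_of_add_eq' (hsum l hl)
  have hα1 : 0 ≤ 1 - (α : ℂ) := hβ I (by simp) ▸ (hnonneg I (by simp)).2
  exact ⟨α, hα0, by exact_mod_cast sub_nonneg.mp hα1, fun l hl => ⟨hα l hl, hβ l hl⟩⟩
end
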